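/- arXiv:math/9912227 — 13 statements merged into one kernel-verified Lean document; each statement's English description precedes it below -/
import Mathlib

section
/- For every nonzero complex number t, the 12×7 complex matrix A(t, −t⁻¹, −t⁻¹, t, t², −1, t⁻²) has rank at most 5. Consequently (since the product t·(−t⁻¹)·(−t⁻¹)·t·t²·(−1)·t⁻²·(−1) equals 1), every point of the translated torus C = {(t, −t⁻¹, −t⁻¹, t, t², −1, t⁻², −1) : t ∈ ℂ*} lies in the first characteristic variety V₁(D). -/
open Matrix

/-- The Alexander matrix of the fundamental group of the complement of the
deconed deleted B₃ arrangement, evaluated at `(t₁, …, t₇)`. -/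
noncomputable def alexD (t₁ t₂ t₃ t₄ t₅ t₆ t₇ : ℂ) : Matrix (Fin 12) (Fin 7) ℂ :=
  !![1 - t₅, 0, 0, 0, t₁ - 1, 0, 0;
     0, t₅ * (t₃ - 1), 1 - t₂ * t₅, 0, t₃ - 1, 0, 0;
     0, 1 - t₅, t₂ * (1 - t₅), 0, t₂ * t₃ - 1, 0, 0;
     0, 0, 0, 1 - t₅, t₄ - 1, 0, 0;
     t₆ * (t₃ - 1), (t₃ - 1) * (t₁ * t₆ - 1), t₂ * (1 - t₁ * t₆), 0, 0, t₃ - 1, 0;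
     1 - t₆, t₁ * (t₃ - 1) * (t₆ - 1), t₁ * t₂ * (1 - t₆), 0, 0, t₁ * t₃ - 1, 0;
     0, t₆ * (t₄ - 1), 0, 1 - t₂ * t₆, 0, t₄ - 1, 0;
     0, 1 - t₆, 0, t₂ * (1 - t₆), 0, t₂ * t₄ - 1, 0;
     t₇ * (t₄ - 1), (t₄ - 1) * (t₁ * t₇ - 1), 0, t₂ * (1 - t₁ * t₇), 0, 0, t₄ - 1;
     1 - t₇, t₁ * (1 - t₇), 0, t₁ * t₂ * (1 - t₇), 0, 0, t₁ * t₂ * t₄ - 1;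
     0, 1 - t₇, 0, 0, 0, 0, t₂ - 1;
     0, 0, 1 - t₇, (t₃ - 1) * (1 - t₇), 0, 0, t₄ * (t₃ - 1)]

/-- The `d`-th characteristic variety of the deleted B₃ arrangement `D`:
points `x` of the algebraic torus `(ℂ*)⁸` such that `(x₁,…,x₇) ∈ V_d(D*)`,
i.e. `rank A(x₁,…,x₇) < 7 - d`, and `x₁x₂⋯x₈ = 1`. -/
noncomputable def VD (d : ℕ) : Set (Fin 8 → ℂ) :=
  {x | (∀ i, x i ≠ 0) ∧
       (alexD (x 0) (x 1) (x 2) (x 3) (x 4) (x 5) (x 6)).rank < 7 - d ∧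
       x 0 * x 1 * x 2 * x 3 * x 4 * x 5 * x 6 * x 7 = 1}

/-! At each point of the translated torus the kernel of `A` contains two explicit vectors whose
coordinates `1` and `5` are `(0, 1)` and `(t, 0)`; they are independent as `t ≠ 0`, so
`rank A ≤ 7 - 2`. Membership in `V₁(D)` then only needs the product of the coordinates, which is `1`. -/

theorem Matrix.rank_add_card_le_of_mulVec_eq_zero {m n K : Type*} [Fintype n] [Field K]
    (A : Matrix m n K) {k : ℕ} {v : Fin k → n → K} (hv : LinearIndependent K v)
    (hAv : ∀ i, A *ᵥ v i = 0) : A.rank + k ≤ Fintype.card n := by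
  have hspan : Submodule.span K (Set.range v) ≤ LinearMap.ker A.mulVecLin :=
    Submodule.span_le.2 <| Set.range_subset_iff.2 hAv
  have hk : k ≤ Module.finrank K (LinearMap.ker A.mulVecLin) := by
    simpa [finrank_span_eq_card hv] using Submodule.finrank_mono hspan
  have hsum := LinearMap.finrank_range_add_finrank_ker A.mulVecLin
  rw [Module.finrank_fintype_fun_eq_card] at hsum
  exact hsum ▸ Nat.add_le_add_left hk _

-- Kernel vectors of `A(t, −t⁻¹, −t⁻¹, t, t², −1, t⁻²)` over `ℚ(t)`, found by row reduction.
def torusKernelVec (t : ℂ) : Fin 2 → Fin 7 → ℂ :=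
  ![![-t, 0, -(t + 1), -t, -(t * (t + 1)), 1, 0],
    ![t ^ 2, t, 2 * t ^ 2 + t, t ^ 2, t ^ 3 + t ^ 2, 0, t - 1]]

theorem alexD_torus_mulVec_torusKernelVec {t : ℂ} (ht : t ≠ 0) (i : Fin 2) :
    alexD t (-t⁻¹) (-t⁻¹) t (t ^ 2) (-1) ((t ^ 2)⁻¹) *ᵥ torusKernelVec t i = 0 := by
  ext j
  fin_cases i <;> fin_cases j <;>
    simp [torusKernelVec, alexD, mulVec, dotProduct, Fin.sum_univ_succ] <;> field_simp <;> ring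

theorem linearIndependent_torusKernelVec {t : ℂ} (ht : t ≠ 0) :
    LinearIndependent ℂ (torusKernelVec t) := by
  rw [torusKernelVec, LinearIndependent.pair_iff]
  intro a b hab
  have h1 := congrFun hab 1
  have h5 := congrFun hab 5
  simp only [neg_add_rev, smul_cons, smul_eq_mul, mul_neg, mul_zero, mul_one, smul_empty,
    Pi.add_apply, cons_val_one, cons_val_zero, zero_add, Pi.zero_apply, mul_eq_zero, ht, or_false,
    cons_val, add_zero] at h1 h5
  exact ⟨h5, h1⟩

theorem alexD_torus_rank_le {t : ℂ} (ht : t ≠ 0) :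
    (alexD t (-t⁻¹) (-t⁻¹) t (t ^ 2) (-1) ((t ^ 2)⁻¹)).rank ≤ 5 := by
  have h := Matrix.rank_add_card_le_of_mulVec_eq_zero _ (linearIndependent_torusKernelVec ht)
    (alexD_torus_mulVec_torusKernelVec ht)
  rw [Fintype.card_fin] at h
  omega

/-- every point of the translated torus
`C = {(t, −t⁻¹, −t⁻¹, t, t², −1, t⁻², −1) : t ∈ ℂ*}` gives an Alexander matrix of
rank at most 5, and hence lies in the first characteristic variety `V₁(D)`. -/
theorem translated_torus_in_V1 (t : ℂ) (ht : t ≠ 0) :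
    (alexD t (-t⁻¹) (-t⁻¹) t (t ^ 2) (-1) ((t ^ 2)⁻¹)).rank ≤ 5 ∧
    (![t, -t⁻¹, -t⁻¹, t, t ^ 2, -1, (t ^ 2)⁻¹, -1] : Fin 8 → ℂ) ∈ VD 1 := by
  have hrank := alexD_torus_rank_le ht
  refine ⟨hrank, fun i => ?_, hrank.trans_lt (by norm_num), ?_⟩
  · fin_cases i <;> simp [ht]
  · show t * (-t⁻¹) * (-t⁻¹) * t * t ^ 2 * (-1) * (t ^ 2)⁻¹ * (-1) = 1
    field_simp
end

section
/- For all nonzero complex numbers s and t, the 12×7 complex matrix A(s, t, (st)⁻¹, 1, s, t, 1) has rank at most 5; that is, the braid component Π₁ = Π(15|26|38) = {(s, t, (st)⁻¹, 1, s, t, 1, (st)⁻¹) : s, t ∈ ℂ*} is contained in the first characteristic variety V₁(D). -/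
open Matrix

set_option maxHeartbeats 1000000 in
/-- The vector `(-s, 1, 0, 0, -s, 1, 0)` is in the kernel of `alexD s t u 1 s t 1`
whenever `u * (s * t) = 1`. -/
lemma alexD_mulVec_w1 (s t u : ℂ) (hu : u * (s * t) = 1) :
    (alexD s t u 1 s t 1).mulVec ![-s, 1, 0, 0, -s, 1, 0] = 0 := by
  funext i
  fin_cases i <;>
    simp only [alexD, Matrix.mulVec, dotProduct, Fin.sum_univ_succ, Fin.sum_univ_zero,
      Matrix.of_apply, Matrix.cons_val_zero, Matrix.cons_val_succ, Matrix.cons_val_succ',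
      Matrix.cons_val_fin_one, Pi.zero_apply, Fin.zero_eta, Fin.mk_one, Matrix.cons_val_one, Matrix.head_cons] <;>
    (first | ring1 | linear_combination hu | linear_combination (-1 : ℂ) * hu | linear_combination (-t) * hu | linear_combination t * hu)

set_option maxHeartbeats 1000000 in
/-- The vector `(-st, 0, 1, 0, -st, 0, 0)` is in the kernel of `alexD s t u 1 s t 1`
whenever `u * (s * t) = 1`. -/
lemma alexD_mulVec_w2 (s t u : ℂ) (hu : u * (s * t) = 1) :
    (alexD s t u 1 s t 1).mulVec ![-(s*t), 0, 1, 0, -(s*t), 0, 0] = 0 := by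
  funext i
  fin_cases i <;>
    simp only [alexD, Matrix.mulVec, dotProduct, Fin.sum_univ_succ, Fin.sum_univ_zero,
      Matrix.of_apply, Matrix.cons_val_zero, Matrix.cons_val_succ, Matrix.cons_val_succ',
      Matrix.cons_val_fin_one, Pi.zero_apply, Fin.zero_eta, Fin.mk_one, Matrix.cons_val_one, Matrix.head_cons] <;>
    (first | ring1 | linear_combination hu | linear_combination (-1 : ℂ) * hu | linear_combination (-t) * hu | linear_combination t * hu)

lemma alexD_rank_le (s t : ℂ) (hs : s ≠ 0) (ht : t ≠ 0) :
    (alexD s t ((s * t)⁻¹) 1 s t 1).rank ≤ 5 := by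
  have hst : s * t ≠ 0 := mul_ne_zero hs ht
  have hu : (s * t)⁻¹ * (s * t) = 1 := inv_mul_cancel₀ hst
  set M := alexD s t ((s * t)⁻¹) 1 s t 1 with hM
  set w1 : Fin 7 → ℂ := ![-s, 1, 0, 0, -s, 1, 0] with hw1
  set w2 : Fin 7 → ℂ := ![-(s*t), 0, 1, 0, -(s*t), 0, 0] with hw2
  have h1 : w1 ∈ LinearMap.ker M.mulVecLin := by
    simp only [LinearMap.mem_ker, Matrix.mulVecLin_apply]
    exact alexD_mulVec_w1 s t _ hu
  have h2 : w2 ∈ LinearMap.ker M.mulVecLin := by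
    simp only [LinearMap.mem_ker, Matrix.mulVecLin_apply]
    exact alexD_mulVec_w2 s t _ hu
  have hli : LinearIndependent ℂ ![w1, w2] := by
    rw [LinearIndependent.pair_iff]
    intro a b hab
    have e1 := congrFun hab 1
    have e2 := congrFun hab 2
    simp [hw1, hw2] at e1 e2
    exact ⟨e1, e2⟩
  have hker : 2 ≤ Module.finrank ℂ (LinearMap.ker M.mulVecLin) := by
    have hspan : Submodule.span ℂ (Set.range ![w1, w2]) ≤ LinearMap.ker M.mulVecLin := by
      rw [Submodule.span_le]
      rintro x ⟨i, rfl⟩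
      fin_cases i <;> simpa using ‹_›
    calc (2 : ℕ) = Module.finrank ℂ (Submodule.span ℂ (Set.range ![w1, w2])) := by
          rw [finrank_span_eq_card hli]; simp
      _ ≤ Module.finrank ℂ (LinearMap.ker M.mulVecLin) := Submodule.finrank_mono hspan
  have hrn := LinearMap.finrank_range_add_finrank_ker M.mulVecLin
  have hdom : Module.finrank ℂ (Fin 7 → ℂ) = 7 := by simp
  have hrank : M.rank = Module.finrank ℂ (LinearMap.range M.mulVecLin) := rfl
  omega

/-- the braid component `Π₁ = Π(15|26|38)` is contained in `V₁(D)`. -/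
theorem braid_component_Pi1_in_V1 (s t : ℂ) (hs : s ≠ 0) (ht : t ≠ 0) :
    (alexD s t ((s * t)⁻¹) 1 s t 1).rank ≤ 5 ∧
    (![s, t, (s * t)⁻¹, 1, s, t, 1, (s * t)⁻¹] : Fin 8 → ℂ) ∈ VD 1 := by
  have hst : s * t ≠ 0 := mul_ne_zero hs ht
  have hrk := alexD_rank_le s t hs ht
  refine ⟨hrk, ?_, ?_, ?_⟩
  · intro i
    fin_cases i <;>
      first | exact hs | exact ht | exact one_ne_zero | exact inv_ne_zero hst
  · show (alexD s t ((s * t)⁻¹) 1 s t 1).rank < 7 - 1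
    omega
  · show s * t * (s * t)⁻¹ * 1 * s * t * 1 * (s * t)⁻¹ = 1
    field_simp
end

section
/- For all nonzero complex numbers s and t, the 12×7 complex matrix A(1, s, t, (st)⁻¹, (st)⁻¹, t, 1) has rank at most 5; that is, the braid component Π₂ = Π(28|36|45) = {(1, s, t, (st)⁻¹, (st)⁻¹, t, 1, s) : s, t ∈ ℂ*} is contained in the first characteristic variety V₁(D). -/
/-!
On `Π₂`, writing `u = (st)⁻¹`, the matrix `A(1, s, t, u, u, t, 1)` annihilates the vectors
`(0, -s, 1 - t, 1, 1, 0, 0)` and `(0, -s, 1, 0, 0, st, 0)`. Their coordinates 4 and 6 form the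
minor `diag(1, st)`, so they are independent, and rank–nullity bounds the rank by `7 - 2 = 5`.
-/

open Matrix

namespace Matrix

variable {R l m k : Type*} [Field R] [Finite l] [Fintype m] [Fintype k]

theorem rank_add_card_le_of_mul_transpose_eq_zero {A : Matrix l m R} {K : Matrix k m R}
    (hK : LinearIndependent R K.row) (hAK : A * Kᵀ = 0) :
    A.rank + Fintype.card k ≤ Fintype.card m := by
  rw [← hK.rank_matrix, ← rank_transpose K]
  exact rank_add_rank_le_card_of_mul_eq_zero hAK

end Matrix

def braidKernel (s t : ℂ) : Matrix (Fin 2) (Fin 7) ℂ :=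
  !![0, -s, 1 - t, 1, 1, 0, 0;
     0, -s, 1, 0, 0, s * t, 0]

theorem alexD_mul_braidKernel_transpose {s t u : ℂ} (h : s * t * u = 1) :
    alexD 1 s t u u t 1 * (braidKernel s t)ᵀ = 0 := by
  ext i j
  fin_cases i <;> fin_cases j <;>
    simp [alexD, braidKernel, mul_apply, Fin.sum_univ_succ] <;> grind

theorem linearIndependent_braidKernel_row {s t : ℂ} (hst : s * t ≠ 0) :
    LinearIndependent ℂ (braidKernel s t).row := by
  rw [show (braidKernel s t).row = ![braidKernel s t 0, braidKernel s t 1] from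
    funext fun i => by fin_cases i <;> rfl, LinearIndependent.pair_iff]
  intro a b hab
  have ha : a = 0 := by simpa [braidKernel] using congrFun hab 3
  have hb : b * (s * t) = 0 := by simpa [braidKernel, ha] using congrFun hab 5
  exact ⟨ha, (mul_eq_zero.mp hb).resolve_right hst⟩

theorem rank_alexD_braid_le {s t u : ℂ} (h : s * t * u = 1) :
    (alexD 1 s t u u t 1).rank ≤ 5 := by
  have := Matrix.rank_add_card_le_of_mul_transpose_eq_zero
    (linearIndependent_braidKernel_row (left_ne_zero_of_mul_eq_one h))
    (alexD_mul_braidKernel_transpose h)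
  simp only [Fintype.card_fin] at this
  omega

/-- the braid component `Π₂ = Π(28|36|45)` is contained in `V₁(D)`. -/
theorem braid_component_Pi2_in_V1 (s t : ℂ) (hs : s ≠ 0) (ht : t ≠ 0) :
    (alexD 1 s t ((s * t)⁻¹) ((s * t)⁻¹) t 1).rank ≤ 5 ∧
    (![1, s, t, (s * t)⁻¹, (s * t)⁻¹, t, 1, s] : Fin 8 → ℂ) ∈ VD 1 := by
  have hrank := rank_alexD_braid_le (mul_inv_cancel₀ (mul_ne_zero hs ht))
  refine ⟨hrank, fun i => ?_, ?_, ?_⟩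
  · fin_cases i <;> simp [hs, ht]
  · exact hrank.trans_lt (by norm_num)
  · simp only [Matrix.cons_val]
    field_simp
end

section
/- For all nonzero complex numbers s and t, the 12×7 complex matrix A(s, t, 1, (st)⁻¹, 1, s, t) has rank at most 5; that is, the braid component Π₄ = Π(16|27|48) = {(s, t, 1, (st)⁻¹, 1, s, t, (st)⁻¹) : s, t ∈ ℂ*} is contained in the first characteristic variety V₁(D). -/
open Matrix

section
variable {α : Type*}
@[local simp] lemma cvm_2_0 (x : α) (u : Fin 1 → α) (h : (0:ℕ) < 2) : vecCons x u ⟨0, h⟩ = x := rfl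
@[local simp] lemma cvm_2_1 (x : α) (u : Fin 1 → α) (h : (1:ℕ) < 2) : vecCons x u ⟨1, h⟩ = u ⟨0, by omega⟩ := rfl
@[local simp] lemma cvm_3_0 (x : α) (u : Fin 2 → α) (h : (0:ℕ) < 3) : vecCons x u ⟨0, h⟩ = x := rfl
@[local simp] lemma cvm_3_1 (x : α) (u : Fin 2 → α) (h : (1:ℕ) < 3) : vecCons x u ⟨1, h⟩ = u ⟨0, by omega⟩ := rfl
@[local simp] lemma cvm_3_2 (x : α) (u : Fin 2 → α) (h : (2:ℕ) < 3) : vecCons x u ⟨2, h⟩ = u ⟨1, by omega⟩ := rfl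
@[local simp] lemma cvm_4_0 (x : α) (u : Fin 3 → α) (h : (0:ℕ) < 4) : vecCons x u ⟨0, h⟩ = x := rfl
@[local simp] lemma cvm_4_1 (x : α) (u : Fin 3 → α) (h : (1:ℕ) < 4) : vecCons x u ⟨1, h⟩ = u ⟨0, by omega⟩ := rfl
@[local simp] lemma cvm_4_2 (x : α) (u : Fin 3 → α) (h : (2:ℕ) < 4) : vecCons x u ⟨2, h⟩ = u ⟨1, by omega⟩ := rfl
@[local simp] lemma cvm_4_3 (x : α) (u : Fin 3 → α) (h : (3:ℕ) < 4) : vecCons x u ⟨3, h⟩ = u ⟨2, by omega⟩ := rfl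
@[local simp] lemma cvm_5_0 (x : α) (u : Fin 4 → α) (h : (0:ℕ) < 5) : vecCons x u ⟨0, h⟩ = x := rfl
@[local simp] lemma cvm_5_1 (x : α) (u : Fin 4 → α) (h : (1:ℕ) < 5) : vecCons x u ⟨1, h⟩ = u ⟨0, by omega⟩ := rfl
@[local simp] lemma cvm_5_2 (x : α) (u : Fin 4 → α) (h : (2:ℕ) < 5) : vecCons x u ⟨2, h⟩ = u ⟨1, by omega⟩ := rfl
@[local simp] lemma cvm_5_3 (x : α) (u : Fin 4 → α) (h : (3:ℕ) < 5) : vecCons x u ⟨3, h⟩ = u ⟨2, by omega⟩ := rfl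
@[local simp] lemma cvm_5_4 (x : α) (u : Fin 4 → α) (h : (4:ℕ) < 5) : vecCons x u ⟨4, h⟩ = u ⟨3, by omega⟩ := rfl
@[local simp] lemma cvm_6_0 (x : α) (u : Fin 5 → α) (h : (0:ℕ) < 6) : vecCons x u ⟨0, h⟩ = x := rfl
@[local simp] lemma cvm_6_1 (x : α) (u : Fin 5 → α) (h : (1:ℕ) < 6) : vecCons x u ⟨1, h⟩ = u ⟨0, by omega⟩ := rfl
@[local simp] lemma cvm_6_2 (x : α) (u : Fin 5 → α) (h : (2:ℕ) < 6) : vecCons x u ⟨2, h⟩ = u ⟨1, by omega⟩ := rfl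
@[local simp] lemma cvm_6_3 (x : α) (u : Fin 5 → α) (h : (3:ℕ) < 6) : vecCons x u ⟨3, h⟩ = u ⟨2, by omega⟩ := rfl
@[local simp] lemma cvm_6_4 (x : α) (u : Fin 5 → α) (h : (4:ℕ) < 6) : vecCons x u ⟨4, h⟩ = u ⟨3, by omega⟩ := rfl
@[local simp] lemma cvm_6_5 (x : α) (u : Fin 5 → α) (h : (5:ℕ) < 6) : vecCons x u ⟨5, h⟩ = u ⟨4, by omega⟩ := rfl
@[local simp] lemma cvm_7_0 (x : α) (u : Fin 6 → α) (h : (0:ℕ) < 7) : vecCons x u ⟨0, h⟩ = x := rfl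
@[local simp] lemma cvm_7_1 (x : α) (u : Fin 6 → α) (h : (1:ℕ) < 7) : vecCons x u ⟨1, h⟩ = u ⟨0, by omega⟩ := rfl
@[local simp] lemma cvm_7_2 (x : α) (u : Fin 6 → α) (h : (2:ℕ) < 7) : vecCons x u ⟨2, h⟩ = u ⟨1, by omega⟩ := rfl
@[local simp] lemma cvm_7_3 (x : α) (u : Fin 6 → α) (h : (3:ℕ) < 7) : vecCons x u ⟨3, h⟩ = u ⟨2, by omega⟩ := rfl
@[local simp] lemma cvm_7_4 (x : α) (u : Fin 6 → α) (h : (4:ℕ) < 7) : vecCons x u ⟨4, h⟩ = u ⟨3, by omega⟩ := rfl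
@[local simp] lemma cvm_7_5 (x : α) (u : Fin 6 → α) (h : (5:ℕ) < 7) : vecCons x u ⟨5, h⟩ = u ⟨4, by omega⟩ := rfl
@[local simp] lemma cvm_7_6 (x : α) (u : Fin 6 → α) (h : (6:ℕ) < 7) : vecCons x u ⟨6, h⟩ = u ⟨5, by omega⟩ := rfl
@[local simp] lemma cvm_8_0 (x : α) (u : Fin 7 → α) (h : (0:ℕ) < 8) : vecCons x u ⟨0, h⟩ = x := rfl
@[local simp] lemma cvm_8_1 (x : α) (u : Fin 7 → α) (h : (1:ℕ) < 8) : vecCons x u ⟨1, h⟩ = u ⟨0, by omega⟩ := rfl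
@[local simp] lemma cvm_8_2 (x : α) (u : Fin 7 → α) (h : (2:ℕ) < 8) : vecCons x u ⟨2, h⟩ = u ⟨1, by omega⟩ := rfl
@[local simp] lemma cvm_8_3 (x : α) (u : Fin 7 → α) (h : (3:ℕ) < 8) : vecCons x u ⟨3, h⟩ = u ⟨2, by omega⟩ := rfl
@[local simp] lemma cvm_8_4 (x : α) (u : Fin 7 → α) (h : (4:ℕ) < 8) : vecCons x u ⟨4, h⟩ = u ⟨3, by omega⟩ := rfl
@[local simp] lemma cvm_8_5 (x : α) (u : Fin 7 → α) (h : (5:ℕ) < 8) : vecCons x u ⟨5, h⟩ = u ⟨4, by omega⟩ := rfl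
@[local simp] lemma cvm_8_6 (x : α) (u : Fin 7 → α) (h : (6:ℕ) < 8) : vecCons x u ⟨6, h⟩ = u ⟨5, by omega⟩ := rfl
@[local simp] lemma cvm_8_7 (x : α) (u : Fin 7 → α) (h : (7:ℕ) < 8) : vecCons x u ⟨7, h⟩ = u ⟨6, by omega⟩ := rfl
@[local simp] lemma cvm_9_0 (x : α) (u : Fin 8 → α) (h : (0:ℕ) < 9) : vecCons x u ⟨0, h⟩ = x := rfl
@[local simp] lemma cvm_9_1 (x : α) (u : Fin 8 → α) (h : (1:ℕ) < 9) : vecCons x u ⟨1, h⟩ = u ⟨0, by omega⟩ := rfl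
@[local simp] lemma cvm_9_2 (x : α) (u : Fin 8 → α) (h : (2:ℕ) < 9) : vecCons x u ⟨2, h⟩ = u ⟨1, by omega⟩ := rfl
@[local simp] lemma cvm_9_3 (x : α) (u : Fin 8 → α) (h : (3:ℕ) < 9) : vecCons x u ⟨3, h⟩ = u ⟨2, by omega⟩ := rfl
@[local simp] lemma cvm_9_4 (x : α) (u : Fin 8 → α) (h : (4:ℕ) < 9) : vecCons x u ⟨4, h⟩ = u ⟨3, by omega⟩ := rfl
@[local simp] lemma cvm_9_5 (x : α) (u : Fin 8 → α) (h : (5:ℕ) < 9) : vecCons x u ⟨5, h⟩ = u ⟨4, by omega⟩ := rfl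
@[local simp] lemma cvm_9_6 (x : α) (u : Fin 8 → α) (h : (6:ℕ) < 9) : vecCons x u ⟨6, h⟩ = u ⟨5, by omega⟩ := rfl
@[local simp] lemma cvm_9_7 (x : α) (u : Fin 8 → α) (h : (7:ℕ) < 9) : vecCons x u ⟨7, h⟩ = u ⟨6, by omega⟩ := rfl
@[local simp] lemma cvm_9_8 (x : α) (u : Fin 8 → α) (h : (8:ℕ) < 9) : vecCons x u ⟨8, h⟩ = u ⟨7, by omega⟩ := rfl
@[local simp] lemma cvm_10_0 (x : α) (u : Fin 9 → α) (h : (0:ℕ) < 10) : vecCons x u ⟨0, h⟩ = x := rfl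
@[local simp] lemma cvm_10_1 (x : α) (u : Fin 9 → α) (h : (1:ℕ) < 10) : vecCons x u ⟨1, h⟩ = u ⟨0, by omega⟩ := rfl
@[local simp] lemma cvm_10_2 (x : α) (u : Fin 9 → α) (h : (2:ℕ) < 10) : vecCons x u ⟨2, h⟩ = u ⟨1, by omega⟩ := rfl
@[local simp] lemma cvm_10_3 (x : α) (u : Fin 9 → α) (h : (3:ℕ) < 10) : vecCons x u ⟨3, h⟩ = u ⟨2, by omega⟩ := rfl
@[local simp] lemma cvm_10_4 (x : α) (u : Fin 9 → α) (h : (4:ℕ) < 10) : vecCons x u ⟨4, h⟩ = u ⟨3, by omega⟩ := rfl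
@[local simp] lemma cvm_10_5 (x : α) (u : Fin 9 → α) (h : (5:ℕ) < 10) : vecCons x u ⟨5, h⟩ = u ⟨4, by omega⟩ := rfl
@[local simp] lemma cvm_10_6 (x : α) (u : Fin 9 → α) (h : (6:ℕ) < 10) : vecCons x u ⟨6, h⟩ = u ⟨5, by omega⟩ := rfl
@[local simp] lemma cvm_10_7 (x : α) (u : Fin 9 → α) (h : (7:ℕ) < 10) : vecCons x u ⟨7, h⟩ = u ⟨6, by omega⟩ := rfl
@[local simp] lemma cvm_10_8 (x : α) (u : Fin 9 → α) (h : (8:ℕ) < 10) : vecCons x u ⟨8, h⟩ = u ⟨7, by omega⟩ := rfl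
@[local simp] lemma cvm_10_9 (x : α) (u : Fin 9 → α) (h : (9:ℕ) < 10) : vecCons x u ⟨9, h⟩ = u ⟨8, by omega⟩ := rfl
@[local simp] lemma cvm_11_0 (x : α) (u : Fin 10 → α) (h : (0:ℕ) < 11) : vecCons x u ⟨0, h⟩ = x := rfl
@[local simp] lemma cvm_11_1 (x : α) (u : Fin 10 → α) (h : (1:ℕ) < 11) : vecCons x u ⟨1, h⟩ = u ⟨0, by omega⟩ := rfl
@[local simp] lemma cvm_11_2 (x : α) (u : Fin 10 → α) (h : (2:ℕ) < 11) : vecCons x u ⟨2, h⟩ = u ⟨1, by omega⟩ := rfl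
@[local simp] lemma cvm_11_3 (x : α) (u : Fin 10 → α) (h : (3:ℕ) < 11) : vecCons x u ⟨3, h⟩ = u ⟨2, by omega⟩ := rfl
@[local simp] lemma cvm_11_4 (x : α) (u : Fin 10 → α) (h : (4:ℕ) < 11) : vecCons x u ⟨4, h⟩ = u ⟨3, by omega⟩ := rfl
@[local simp] lemma cvm_11_5 (x : α) (u : Fin 10 → α) (h : (5:ℕ) < 11) : vecCons x u ⟨5, h⟩ = u ⟨4, by omega⟩ := rfl
@[local simp] lemma cvm_11_6 (x : α) (u : Fin 10 → α) (h : (6:ℕ) < 11) : vecCons x u ⟨6, h⟩ = u ⟨5, by omega⟩ := rfl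
@[local simp] lemma cvm_11_7 (x : α) (u : Fin 10 → α) (h : (7:ℕ) < 11) : vecCons x u ⟨7, h⟩ = u ⟨6, by omega⟩ := rfl
@[local simp] lemma cvm_11_8 (x : α) (u : Fin 10 → α) (h : (8:ℕ) < 11) : vecCons x u ⟨8, h⟩ = u ⟨7, by omega⟩ := rfl
@[local simp] lemma cvm_11_9 (x : α) (u : Fin 10 → α) (h : (9:ℕ) < 11) : vecCons x u ⟨9, h⟩ = u ⟨8, by omega⟩ := rfl
@[local simp] lemma cvm_11_10 (x : α) (u : Fin 10 → α) (h : (10:ℕ) < 11) : vecCons x u ⟨10, h⟩ = u ⟨9, by omega⟩ := rfl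
@[local simp] lemma cvm_12_0 (x : α) (u : Fin 11 → α) (h : (0:ℕ) < 12) : vecCons x u ⟨0, h⟩ = x := rfl
@[local simp] lemma cvm_12_1 (x : α) (u : Fin 11 → α) (h : (1:ℕ) < 12) : vecCons x u ⟨1, h⟩ = u ⟨0, by omega⟩ := rfl
@[local simp] lemma cvm_12_2 (x : α) (u : Fin 11 → α) (h : (2:ℕ) < 12) : vecCons x u ⟨2, h⟩ = u ⟨1, by omega⟩ := rfl
@[local simp] lemma cvm_12_3 (x : α) (u : Fin 11 → α) (h : (3:ℕ) < 12) : vecCons x u ⟨3, h⟩ = u ⟨2, by omega⟩ := rfl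
@[local simp] lemma cvm_12_4 (x : α) (u : Fin 11 → α) (h : (4:ℕ) < 12) : vecCons x u ⟨4, h⟩ = u ⟨3, by omega⟩ := rfl
@[local simp] lemma cvm_12_5 (x : α) (u : Fin 11 → α) (h : (5:ℕ) < 12) : vecCons x u ⟨5, h⟩ = u ⟨4, by omega⟩ := rfl
@[local simp] lemma cvm_12_6 (x : α) (u : Fin 11 → α) (h : (6:ℕ) < 12) : vecCons x u ⟨6, h⟩ = u ⟨5, by omega⟩ := rfl
@[local simp] lemma cvm_12_7 (x : α) (u : Fin 11 → α) (h : (7:ℕ) < 12) : vecCons x u ⟨7, h⟩ = u ⟨6, by omega⟩ := rfl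
@[local simp] lemma cvm_12_8 (x : α) (u : Fin 11 → α) (h : (8:ℕ) < 12) : vecCons x u ⟨8, h⟩ = u ⟨7, by omega⟩ := rfl
@[local simp] lemma cvm_12_9 (x : α) (u : Fin 11 → α) (h : (9:ℕ) < 12) : vecCons x u ⟨9, h⟩ = u ⟨8, by omega⟩ := rfl
@[local simp] lemma cvm_12_10 (x : α) (u : Fin 11 → α) (h : (10:ℕ) < 12) : vecCons x u ⟨10, h⟩ = u ⟨9, by omega⟩ := rfl
@[local simp] lemma cvm_12_11 (x : α) (u : Fin 11 → α) (h : (11:ℕ) < 12) : vecCons x u ⟨11, h⟩ = u ⟨10, by omega⟩ := rfl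
@[local simp] lemma cv_3_2 (x : α) (u : Fin 2 → α) : vecCons x u (2 : Fin 3) = u (1 : Fin 2) := rfl
@[local simp] lemma cv_4_2 (x : α) (u : Fin 3 → α) : vecCons x u (2 : Fin 4) = u (1 : Fin 3) := rfl
@[local simp] lemma cv_4_3 (x : α) (u : Fin 3 → α) : vecCons x u (3 : Fin 4) = u (2 : Fin 3) := rfl
@[local simp] lemma cv_5_2 (x : α) (u : Fin 4 → α) : vecCons x u (2 : Fin 5) = u (1 : Fin 4) := rfl
@[local simp] lemma cv_5_3 (x : α) (u : Fin 4 → α) : vecCons x u (3 : Fin 5) = u (2 : Fin 4) := rfl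
@[local simp] lemma cv_5_4 (x : α) (u : Fin 4 → α) : vecCons x u (4 : Fin 5) = u (3 : Fin 4) := rfl
@[local simp] lemma cv_6_2 (x : α) (u : Fin 5 → α) : vecCons x u (2 : Fin 6) = u (1 : Fin 5) := rfl
@[local simp] lemma cv_6_3 (x : α) (u : Fin 5 → α) : vecCons x u (3 : Fin 6) = u (2 : Fin 5) := rfl
@[local simp] lemma cv_6_4 (x : α) (u : Fin 5 → α) : vecCons x u (4 : Fin 6) = u (3 : Fin 5) := rfl
@[local simp] lemma cv_6_5 (x : α) (u : Fin 5 → α) : vecCons x u (5 : Fin 6) = u (4 : Fin 5) := rfl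
@[local simp] lemma cv_7_2 (x : α) (u : Fin 6 → α) : vecCons x u (2 : Fin 7) = u (1 : Fin 6) := rfl
@[local simp] lemma cv_7_3 (x : α) (u : Fin 6 → α) : vecCons x u (3 : Fin 7) = u (2 : Fin 6) := rfl
@[local simp] lemma cv_7_4 (x : α) (u : Fin 6 → α) : vecCons x u (4 : Fin 7) = u (3 : Fin 6) := rfl
@[local simp] lemma cv_7_5 (x : α) (u : Fin 6 → α) : vecCons x u (5 : Fin 7) = u (4 : Fin 6) := rfl
@[local simp] lemma cv_7_6 (x : α) (u : Fin 6 → α) : vecCons x u (6 : Fin 7) = u (5 : Fin 6) := rfl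
@[local simp] lemma cv_8_2 (x : α) (u : Fin 7 → α) : vecCons x u (2 : Fin 8) = u (1 : Fin 7) := rfl
@[local simp] lemma cv_8_3 (x : α) (u : Fin 7 → α) : vecCons x u (3 : Fin 8) = u (2 : Fin 7) := rfl
@[local simp] lemma cv_8_4 (x : α) (u : Fin 7 → α) : vecCons x u (4 : Fin 8) = u (3 : Fin 7) := rfl
@[local simp] lemma cv_8_5 (x : α) (u : Fin 7 → α) : vecCons x u (5 : Fin 8) = u (4 : Fin 7) := rfl
@[local simp] lemma cv_8_6 (x : α) (u : Fin 7 → α) : vecCons x u (6 : Fin 8) = u (5 : Fin 7) := rfl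
@[local simp] lemma cv_8_7 (x : α) (u : Fin 7 → α) : vecCons x u (7 : Fin 8) = u (6 : Fin 7) := rfl
@[local simp] lemma cv_9_2 (x : α) (u : Fin 8 → α) : vecCons x u (2 : Fin 9) = u (1 : Fin 8) := rfl
@[local simp] lemma cv_9_3 (x : α) (u : Fin 8 → α) : vecCons x u (3 : Fin 9) = u (2 : Fin 8) := rfl
@[local simp] lemma cv_9_4 (x : α) (u : Fin 8 → α) : vecCons x u (4 : Fin 9) = u (3 : Fin 8) := rfl
@[local simp] lemma cv_9_5 (x : α) (u : Fin 8 → α) : vecCons x u (5 : Fin 9) = u (4 : Fin 8) := rfl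
@[local simp] lemma cv_9_6 (x : α) (u : Fin 8 → α) : vecCons x u (6 : Fin 9) = u (5 : Fin 8) := rfl
@[local simp] lemma cv_9_7 (x : α) (u : Fin 8 → α) : vecCons x u (7 : Fin 9) = u (6 : Fin 8) := rfl
@[local simp] lemma cv_9_8 (x : α) (u : Fin 8 → α) : vecCons x u (8 : Fin 9) = u (7 : Fin 8) := rfl
@[local simp] lemma cv_10_2 (x : α) (u : Fin 9 → α) : vecCons x u (2 : Fin 10) = u (1 : Fin 9) := rfl
@[local simp] lemma cv_10_3 (x : α) (u : Fin 9 → α) : vecCons x u (3 : Fin 10) = u (2 : Fin 9) := rfl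
@[local simp] lemma cv_10_4 (x : α) (u : Fin 9 → α) : vecCons x u (4 : Fin 10) = u (3 : Fin 9) := rfl
@[local simp] lemma cv_10_5 (x : α) (u : Fin 9 → α) : vecCons x u (5 : Fin 10) = u (4 : Fin 9) := rfl
@[local simp] lemma cv_10_6 (x : α) (u : Fin 9 → α) : vecCons x u (6 : Fin 10) = u (5 : Fin 9) := rfl
@[local simp] lemma cv_10_7 (x : α) (u : Fin 9 → α) : vecCons x u (7 : Fin 10) = u (6 : Fin 9) := rfl
@[local simp] lemma cv_10_8 (x : α) (u : Fin 9 → α) : vecCons x u (8 : Fin 10) = u (7 : Fin 9) := rfl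
@[local simp] lemma cv_10_9 (x : α) (u : Fin 9 → α) : vecCons x u (9 : Fin 10) = u (8 : Fin 9) := rfl
@[local simp] lemma cv_11_2 (x : α) (u : Fin 10 → α) : vecCons x u (2 : Fin 11) = u (1 : Fin 10) := rfl
@[local simp] lemma cv_11_3 (x : α) (u : Fin 10 → α) : vecCons x u (3 : Fin 11) = u (2 : Fin 10) := rfl
@[local simp] lemma cv_11_4 (x : α) (u : Fin 10 → α) : vecCons x u (4 : Fin 11) = u (3 : Fin 10) := rfl
@[local simp] lemma cv_11_5 (x : α) (u : Fin 10 → α) : vecCons x u (5 : Fin 11) = u (4 : Fin 10) := rfl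
@[local simp] lemma cv_11_6 (x : α) (u : Fin 10 → α) : vecCons x u (6 : Fin 11) = u (5 : Fin 10) := rfl
@[local simp] lemma cv_11_7 (x : α) (u : Fin 10 → α) : vecCons x u (7 : Fin 11) = u (6 : Fin 10) := rfl
@[local simp] lemma cv_11_8 (x : α) (u : Fin 10 → α) : vecCons x u (8 : Fin 11) = u (7 : Fin 10) := rfl
@[local simp] lemma cv_11_9 (x : α) (u : Fin 10 → α) : vecCons x u (9 : Fin 11) = u (8 : Fin 10) := rfl
@[local simp] lemma cv_11_10 (x : α) (u : Fin 10 → α) : vecCons x u (10 : Fin 11) = u (9 : Fin 10) := rfl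
@[local simp] lemma cv_12_2 (x : α) (u : Fin 11 → α) : vecCons x u (2 : Fin 12) = u (1 : Fin 11) := rfl
@[local simp] lemma cv_12_3 (x : α) (u : Fin 11 → α) : vecCons x u (3 : Fin 12) = u (2 : Fin 11) := rfl
@[local simp] lemma cv_12_4 (x : α) (u : Fin 11 → α) : vecCons x u (4 : Fin 12) = u (3 : Fin 11) := rfl
@[local simp] lemma cv_12_5 (x : α) (u : Fin 11 → α) : vecCons x u (5 : Fin 12) = u (4 : Fin 11) := rfl
@[local simp] lemma cv_12_6 (x : α) (u : Fin 11 → α) : vecCons x u (6 : Fin 12) = u (5 : Fin 11) := rfl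
@[local simp] lemma cv_12_7 (x : α) (u : Fin 11 → α) : vecCons x u (7 : Fin 12) = u (6 : Fin 11) := rfl
@[local simp] lemma cv_12_8 (x : α) (u : Fin 11 → α) : vecCons x u (8 : Fin 12) = u (7 : Fin 11) := rfl
@[local simp] lemma cv_12_9 (x : α) (u : Fin 11 → α) : vecCons x u (9 : Fin 12) = u (8 : Fin 11) := rfl
@[local simp] lemma cv_12_10 (x : α) (u : Fin 11 → α) : vecCons x u (10 : Fin 12) = u (9 : Fin 11) := rfl
@[local simp] lemma cv_12_11 (x : α) (u : Fin 11 → α) : vecCons x u (11 : Fin 12) = u (10 : Fin 11) := rfl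

@[local simp] lemma cvm_1_0 (x : α) (u : Fin 0 → α) (h : (0:ℕ) < 1) : vecCons x u ⟨0, h⟩ = x := rfl
end
noncomputable def leftB (s t : ℂ) : Matrix (Fin 12) (Fin 5) ℂ :=
  !![0, 0, s - 1, 0, 0;
     0, 1 - t, 0, 0, 0;
     0, 0, t - 1, 0, 0;
     0, 0, (s * t)⁻¹ - 1, 0, 0;
     0, t * (1 - s * s), 0, 0, 0;
     1 - s, s * t * (1 - s), 0, s - 1, 0;
     0, 0, 0, (s * t)⁻¹ - 1, 0;
     0, 0, 0, t * (s * t)⁻¹ - 1, 0;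
     t * ((s * t)⁻¹ - 1), 0, 0, 0, (s * t)⁻¹ - 1;
     1 - t, 0, 0, 0, 0;
     0, 0, 0, 0, t - 1;
     0, 1 - t, 0, 0, 0]
noncomputable def rightC (s t : ℂ) : Matrix (Fin 5) (Fin 7) ℂ :=
  !![1, s, 0, s * t, 0, 0, 0;
     0, 0, 1, 0, 0, 0, 0;
     0, 0, 0, 0, 1, 0, 0;
     0, s, 0, s * t, 0, 1, 0;
     0, -1, 0, 0, 0, 0, 1]

set_option maxHeartbeats 1000000 in
lemma alexD_factor (s t : ℂ) (hs : s ≠ 0) (ht : t ≠ 0) :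
    alexD s t 1 ((s * t)⁻¹) 1 s t = leftB s t * rightC s t := by
  have hst : s * t ≠ 0 := mul_ne_zero hs ht
  ext i j
  fin_cases i <;> fin_cases j <;>
    simp only [alexD, leftB, rightC, Matrix.mul_apply, Fin.sum_univ_five, Matrix.of_apply,
    Matrix.cons_val_zero, Matrix.cons_val_one, Matrix.head_cons, cvm_1_0, cvm_2_0, cvm_2_1, cvm_3_0, cvm_3_1, cvm_3_2, cvm_4_0, cvm_4_1, cvm_4_2, cvm_4_3, cvm_5_0, cvm_5_1, cvm_5_2, cvm_5_3, cvm_5_4, cvm_6_0, cvm_6_1, cvm_6_2, cvm_6_3, cvm_6_4, cvm_6_5, cvm_7_0, cvm_7_1, cvm_7_2, cvm_7_3, cvm_7_4, cvm_7_5, cvm_7_6, cvm_8_0, cvm_8_1, cvm_8_2, cvm_8_3, cvm_8_4, cvm_8_5, cvm_8_6, cvm_8_7, cvm_9_0, cvm_9_1, cvm_9_2, cvm_9_3, cvm_9_4, cvm_9_5, cvm_9_6, cvm_9_7, cvm_9_8, cvm_10_0, cvm_10_1, cvm_10_2, cvm_10_3, cvm_10_4, cvm_10_5, cvm_10_6,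 cvm_10_7, cvm_10_8, cvm_10_9, cvm_11_0, cvm_11_1, cvm_11_2, cvm_11_3, cvm_11_4, cvm_11_5, cvm_11_6, cvm_11_7, cvm_11_8, cvm_11_9, cvm_11_10, cvm_12_0, cvm_12_1, cvm_12_2, cvm_12_3, cvm_12_4, cvm_12_5, cvm_12_6, cvm_12_7, cvm_12_8, cvm_12_9, cvm_12_10, cvm_12_11, cv_3_2, cv_4_2, cv_4_3, cv_5_2, cv_5_3, cv_5_4, cv_6_2, cv_6_3, cv_6_4, cv_6_5, cv_7_2, cv_7_3, cv_7_4, cv_7_5, cv_7_6, cv_8_2, cv_8_3, cv_8_4, cv_8_5, cv_8_6, cv_8_7, cv_9_2, cv_9_3, cv_9_4, cv_9_5, cv_9_6, cv_9_7, cv_9_8, cv_10_2, cv_10_3, cv_10_4, cv_10_5, cv_10_6, cv_10_7, cv_10_8, cv_10_9, cv_11_2, cv_11_3, cv_11_4, cv_11_5, cv_11_6, cv_11_7, cv_11_8, cv_11_9, cv_11_10, cv_12_2, cv_12_3, cv_12_4, cv_12_5, cv_12_6, cv_12_7, cv_12_8, cv_12_9, cv_12_10, cv_12_11] <;>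
    first
    | rfl
    | ring1
    | (field_simp; ring1)
    | field_simp

lemma rank_le_five (s t : ℂ) (hs : s ≠ 0) (ht : t ≠ 0) :
    (alexD s t 1 ((s * t)⁻¹) 1 s t).rank ≤ 5 := by
  rw [alexD_factor s t hs ht]
  calc (leftB s t * rightC s t).rank ≤ (leftB s t).rank := Matrix.rank_mul_le_left _ _
    _ ≤ 5 := by simpa using Matrix.rank_le_card_width (leftB s t)

/-- the braid component `Π₄ = Π(16|27|48)` is contained in `V₁(D)`. -/
theorem braid_component_Pi4_in_V1 (s t : ℂ) (hs : s ≠ 0) (ht : t ≠ 0) :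
    (alexD s t 1 ((s * t)⁻¹) 1 s t).rank ≤ 5 ∧
    (![s, t, 1, (s * t)⁻¹, 1, s, t, (s * t)⁻¹] : Fin 8 → ℂ) ∈ VD 1 := by
  have hst : s * t ≠ 0 := mul_ne_zero hs ht
  have h5 := rank_le_five s t hs ht
  refine ⟨h5, ?_, ?_, ?_⟩
  · intro i
    fin_cases i <;>
      simp [hs, ht, hst, cvm_8_0, cvm_8_1, cvm_8_2, cvm_8_3, cvm_8_4, cvm_8_5, cvm_8_6, cvm_8_7,
        cv_8_2, cv_8_3, cv_8_4, cv_8_5, cv_8_6, cv_8_7, cv_7_2, cv_7_3, cv_7_4, cv_7_5, cv_7_6,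
        cv_6_2, cv_6_3, cv_6_4, cv_6_5, cv_5_2, cv_5_3, cv_5_4, cv_4_2, cv_4_3, cv_3_2]
  · show (alexD s t 1 ((s * t)⁻¹) 1 s t).rank < 7 - 1
    omega
  · show s * t * 1 * (s * t)⁻¹ * 1 * s * t * (s * t)⁻¹ = 1
    field_simp
end

section
/- For all nonzero complex numbers s, t, u, the 12×7 complex matrix A(1, 1, 1, 1, s, t, u) has rank at most 4; that is, the 3-dimensional local component of the characteristic varieties of D corresponding to the quadruple point {5,6,7,8} is contained in the second characteristic variety V₂(D). -/
open Matrix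

/-- The left factor: first four columns of `alexD 1 1 1 1 s t u`. -/
noncomputable def leftD (s t u : ℂ) : Matrix (Fin 12) (Fin 4) ℂ :=
  !![1 - s, 0, 0, 0;
     0, 0, 1 - s, 0;
     0, 1 - s, 1 - s, 0;
     0, 0, 0, 1 - s;
     0, 0, 1 - t, 0;
     1 - t, 0, 1 - t, 0;
     0, 0, 0, 1 - t;
     0, 1 - t, 0, 1 - t;
     0, 0, 0, 1 - u;
     1 - u, 1 - u, 0, 1 - u;
     0, 1 - u, 0, 0;
     0, 0, 1 - u, 0]

/-- The right factor: `[I₄ | 0]`. -/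
noncomputable def rightD : Matrix (Fin 4) (Fin 7) ℂ :=
  !![1, 0, 0, 0, 0, 0, 0;
     0, 1, 0, 0, 0, 0, 0;
     0, 0, 1, 0, 0, 0, 0;
     0, 0, 0, 1, 0, 0, 0]

set_option maxHeartbeats 1600000 in
lemma alexD_factor_s8 (s t u : ℂ) :
    alexD 1 1 1 1 s t u = leftD s t u * rightD := by
  ext i j
  fin_cases i <;> fin_cases j <;>
    norm_num [alexD, leftD, rightD, Matrix.mul_apply, Fin.sum_univ_succ]

lemma alexD_rank_le_s8 (s t u : ℂ) : (alexD 1 1 1 1 s t u).rank ≤ 4 := by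
  rw [alexD_factor_s8]
  calc (leftD s t u * rightD).rank ≤ rightD.rank := Matrix.rank_mul_le_right _ _
    _ ≤ 4 := by simpa using Matrix.rank_le_card_height rightD

/-- the 3-dimensional local component corresponding to the
quadruple point `{5,6,7,8}` is contained in the second characteristic
variety `V₂(D)`. -/
theorem quadruple_point_component_in_V2 (s t u : ℂ) (hs : s ≠ 0) (ht : t ≠ 0) (hu : u ≠ 0) :
    (alexD 1 1 1 1 s t u).rank ≤ 4 ∧
    (![1, 1, 1, 1, s, t, u, (s * t * u)⁻¹] : Fin 8 → ℂ) ∈ VD 2 := by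
  refine ⟨alexD_rank_le_s8 s t u, ?_, ?_, ?_⟩
  · intro i
    fin_cases i
    · exact one_ne_zero
    · exact one_ne_zero
    · exact one_ne_zero
    · exact one_ne_zero
    · exact hs
    · exact ht
    · exact hu
    · exact inv_ne_zero (mul_ne_zero (mul_ne_zero hs ht) hu)
  · have h := alexD_rank_le_s8 s t u
    show (alexD 1 1 1 1 s t u).rank < 7 - 2
    omega
  · show (1 : ℂ) * 1 * 1 * 1 * s * t * u * (s * t * u)⁻¹ = 1
    field_simp
end

section
/- The 12×7 complex matrix A(1, −1, −1, 1, 1, −1, 1) has rank at most 4; that is, the point ρ₁ = (1, −1, −1, 1, 1, −1, 1, −1) belongs to the second characteristic variety V₂(D). -/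
open Matrix

/-! At `ρ₁` five rows of the Alexander matrix vanish and the other seven take only four distinct
values, so its row space has dimension at most `4 < 7 - 2`. -/

theorem Matrix.rank_le_card_of_row_mem_span {m n k R : Type*} [Fintype m] [Fintype n] [Fintype k]
    [Field R] (A : Matrix m n R) (v : k → n → R) (h : ∀ i, A i ∈ Submodule.span R (Set.range v)) :
    A.rank ≤ Fintype.card k := by
  rw [rank_eq_finrank_span_row]
  calc _ ≤ Module.finrank R (Submodule.span R (Set.range v)) :=
        Submodule.finrank_mono (Submodule.span_le.mpr (Set.range_subset_iff.mpr h))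
    _ ≤ Fintype.card k := finrank_range_le_card v

theorem alexD_rho1 : alexD 1 (-1) (-1) 1 1 (-1) 1 =
    !![0, 0, 0, 0, 0, 0, 0;
       0, -2, 2, 0, -2, 0, 0;
       0, 0, 0, 0, 0, 0, 0;
       0, 0, 0, 0, 0, 0, 0;
       2, 4, -2, 0, 0, -2, 0;
       2, 4, -2, 0, 0, -2, 0;
       0, 0, 0, 0, 0, 0, 0;
       0, 2, 0, -2, 0, -2, 0;
       0, 0, 0, 0, 0, 0, 0;
       0, 0, 0, 0, 0, 0, -2;
       0, 0, 0, 0, 0, 0, -2;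
       0, 0, 0, 0, 0, 0, -2] := by
  norm_num [alexD]

theorem rank_alexD_rho1_le : (alexD 1 (-1) (-1) 1 1 (-1) 1).rank ≤ 4 := by
  rw [alexD_rho1]
  refine Matrix.rank_le_card_of_row_mem_span _ ![![0, -2, 2, 0, -2, 0, 0], ![2, 4, -2, 0, 0, -2, 0],
    ![0, 2, 0, -2, 0, -2, 0], ![0, 0, 0, 0, 0, 0, -2]] fun i => ?_
  fin_cases i
  all_goals first
    | exact Submodule.subset_span ⟨0, rfl⟩
    | exact Submodule.subset_span ⟨1, rfl⟩
    | exact Submodule.subset_span ⟨2, rfl⟩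
    | exact Submodule.subset_span ⟨3, rfl⟩
    | convert Submodule.zero_mem _ using 1; ext j; fin_cases j <;> rfl

/-- the point `ρ₁ = (1, −1, −1, 1, 1, −1, 1, −1)` belongs to the
second characteristic variety `V₂(D)`. -/
theorem rho1_in_V2 :
    (alexD 1 (-1) (-1) 1 1 (-1) 1).rank ≤ 4 ∧
    (![1, -1, -1, 1, 1, -1, 1, -1] : Fin 8 → ℂ) ∈ VD 2 := by
  refine ⟨rank_alexD_rho1_le, fun i => ?_, ?_, ?_⟩
  · fin_cases i <;> norm_num
  · exact Nat.lt_succ_of_le rank_alexD_rho1_le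
  · change (1 : ℂ) * -1 * -1 * 1 * 1 * -1 * 1 * -1 = 1
    norm_num
end

section
/- The 12×7 complex matrix A(−1, 1, 1, −1, 1, −1, 1) has rank at most 4; that is, the point ρ₂ = (−1, 1, 1, −1, 1, −1, 1, −1) belongs to the second characteristic variety V₂(D). -/
open Matrix

/-! At `ρ₂` six rows of the Alexander matrix vanish and the remaining six take only four distinct
values, so the matrix factors through `ℂ⁴` as a row selection times the matrix of those four rows. -/

noncomputable def alexDRho2Rows : Matrix (Fin 4) (Fin 7) ℂ :=
  !![0, 0, 0, 0, -2, 0, 0;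
     2, 0, -2, 0, 0, -2, 0;
     0, 2, 0, 2, 0, -2, 0;
     -2, 4, 0, 2, 0, 0, -2]

noncomputable def alexDRho2Selection : Matrix (Fin 12) (Fin 4) ℂ :=
  !![1, 0, 0, 0; 0, 0, 0, 0; 0, 0, 0, 0; 1, 0, 0, 0; 0, 0, 0, 0; 0, 1, 0, 0;
     0, 0, 1, 0; 0, 0, 1, 0; 0, 0, 0, 1; 0, 0, 0, 0; 0, 0, 0, 0; 0, 0, 0, 0]

theorem alexD_rho2_eq_mul :
    alexD (-1) 1 1 (-1) 1 (-1) 1 = alexDRho2Selection * alexDRho2Rows := by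
  ext i j
  fin_cases i <;> fin_cases j <;>
    simp [alexD, alexDRho2Selection, alexDRho2Rows, mul_apply, Fin.sum_univ_four] <;> norm_num

theorem alexD_rho2_rank_le : (alexD (-1) 1 1 (-1) 1 (-1) 1).rank ≤ 4 :=
  alexD_rho2_eq_mul ▸ (rank_mul_le_left _ _).trans (rank_le_width _)

/-- the point `ρ₂ = (−1, 1, 1, −1, 1, −1, 1, −1)` belongs to the
second characteristic variety `V₂(D)`. -/
theorem rho2_in_V2 :
    (alexD (-1) 1 1 (-1) 1 (-1) 1).rank ≤ 4 ∧
    (![-1, 1, 1, -1, 1, -1, 1, -1] : Fin 8 → ℂ) ∈ VD 2 := by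
  refine ⟨alexD_rho2_rank_le, ?_, ?_, ?_⟩
  · intro i
    fin_cases i <;> norm_num
  · exact alexD_rho2_rank_le.trans_lt (by norm_num)
  · show (-1 : ℂ) * 1 * 1 * (-1) * 1 * (-1) * 1 * (-1) = 1
    norm_num
end

section
/- Let i ∈ ℂ be a square root of −1. The 12×7 complex matrix A(i, i, i, i, −1, −1, −1) has rank exactly 5. Consequently the point t = (i, i, i, i, −1, −1, −1, −1), which lies on the translated torus C = {(t, −t⁻¹, −t⁻¹, t, t², −1, t⁻², −1) : t ∈ ℂ*} (take t = i), belongs to the first characteristic variety V₁(D) but not to the second characteristic variety V₂(D); equivalently, the rank-1 local system on the complement of D corresponding to this point has first cohomology of dimension exactly 1. -/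
open Matrix

/-! At `t = (i, i, i, i, -1, -1, -1)` the rows `10, 1, 0, 3, 4` and columns `6, 4, 0, 3, 5` of
`A(t)` (indexed from `0`) form a lower triangular minor with diagonal `(i - 1, i - 1, 2, 2, i - 1)`,
so `rank A(t) ≥ 5`; two independent vectors in the kernel give `rank A(t) ≤ 7 - 2`. The
remaining condition for `V₁(D)` is the product condition `i⁴ (-1)⁴ = 1`. -/

theorem Matrix.le_rank_of_isLowerTriangular_submatrix {R m n : Type*} [CommRing R] [IsDomain R]
    [Fintype n] {k : ℕ} (A : Matrix m n R) (r : Fin k → m) (c : Fin k → n)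
    (hA : (A.submatrix r c).IsLowerTriangular) (hdiag : ∀ j, A (r j) (c j) ≠ 0) :
    k ≤ A.rank := by
  have hdet : (A.submatrix r c).det ≠ 0 := by
    rw [det_of_isLowerTriangular _ hA]
    exact Finset.prod_ne_zero_iff.mpr fun j _ => hdiag j
  simpa [rank_of_det_ne_zero hdet] using A.rank_submatrix_le r c

section PointOfC

variable {i : ℂ}

def alexDKernelBasis (i : ℂ) : Matrix (Fin 7) (Fin 2) ℂ :=
  !![-i, 1 + i;
     0, 1 - i;
     -1 - i, 3 + i;
     -i, 1 + i;
     1 - i, 2 * i;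
     1, 0;
     0, 2]

theorem alexD_mul_alexDKernelBasis (hi : i ^ 2 = -1) :
    alexD i i i i (-1) (-1) (-1) * alexDKernelBasis i = 0 := by
  ext a b
  fin_cases a <;> fin_cases b <;>
    simp [alexD, alexDKernelBasis, Matrix.mul_apply, Fin.sum_univ_succ] <;> grind

theorem two_le_rank_alexDKernelBasis : 2 ≤ (alexDKernelBasis i).rank := by
  refine (alexDKernelBasis i).le_rank_of_isLowerTriangular_submatrix ![5, 6] ![0, 1] ?_ ?_
  · intro a b
    rw [OrderDual.toDual_lt_toDual]
    fin_cases a <;> fin_cases b <;> simp [alexDKernelBasis]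
  · intro j
    fin_cases j <;> simp [alexDKernelBasis]

theorem rank_alexD_le_five (hi : i ^ 2 = -1) : (alexD i i i i (-1) (-1) (-1)).rank ≤ 5 := by
  have := rank_add_rank_le_card_of_mul_eq_zero (alexD_mul_alexDKernelBasis hi)
  have := two_le_rank_alexDKernelBasis (i := i)
  simp only [Fintype.card_fin] at *
  omega

theorem five_le_rank_alexD (hi : i ≠ 1) : 5 ≤ (alexD i i i i (-1) (-1) (-1)).rank := by
  have hi : i - 1 ≠ 0 := sub_ne_zero.mpr hi
  refine (alexD i i i i (-1) (-1) (-1)).le_rank_of_isLowerTriangular_submatrix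
    ![10, 1, 0, 3, 4] ![6, 4, 0, 3, 5] ?_ ?_
  · intro a b
    rw [OrderDual.toDual_lt_toDual]
    fin_cases a <;> fin_cases b <;> simp [alexD]
  · intro j
    fin_cases j <;> simp [alexD, hi]

theorem rank_alexD_eq_five (hi : i ^ 2 = -1) : (alexD i i i i (-1) (-1) (-1)).rank = 5 := by
  have hi1 : i ≠ 1 := by
    rintro rfl
    norm_num at hi
  exact (rank_alexD_le_five hi).antisymm (five_le_rank_alexD hi1)

end PointOfC

/-- for a square root `i` of `−1`, the matrix `A(i,i,i,i,−1,−1,−1)`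
has rank exactly 5; hence the point `(i,i,i,i,−1,−1,−1,−1)` of the translated
torus `C` belongs to `V₁(D)` but not to `V₂(D)`. -/
theorem point_of_C_in_V1_not_V2 (i : ℂ) (hi : i ^ 2 = -1) :
    (alexD i i i i (-1) (-1) (-1)).rank = 5 ∧
    (![i, i, i, i, -1, -1, -1, -1] : Fin 8 → ℂ) ∈ VD 1 ∧
    (![i, i, i, i, -1, -1, -1, -1] : Fin 8 → ℂ) ∉ VD 2 := by
  have hrank := rank_alexD_eq_five hi
  have hi0 : i ≠ 0 := by
    rintro rfl
    norm_num at hi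
  refine ⟨hrank, ⟨?_, ?_, ?_⟩, fun ⟨_, hlt, _⟩ => ?_⟩
  · intro j
    fin_cases j <;> simp [hi0]
  · show (alexD i i i i (-1) (-1) (-1)).rank < 7 - 1
    omega
  · show i * i * i * i * (-1) * (-1) * (-1) * (-1) = 1
    linear_combination (i ^ 2 - 1) * hi
  · change (alexD i i i i (-1) (-1) (-1)).rank < 7 - 2 at hlt
    omega
end

section
/- In (ℂ*)⁸, the intersection Π₁ ∩ Π₂ ∩ Π₃ ∩ C of the three braid components Π₁ = {(s, t, (st)⁻¹, 1, s, t, 1, (st)⁻¹) : s,t ∈ ℂ*}, Π₂ = {(1, s, t, (st)⁻¹, (st)⁻¹, t, 1, s) : s,t ∈ ℂ*}, Π₃ = {(s, t, t, s, 1, (st)⁻¹, 1, (st)⁻¹) : s,t ∈ ℂ*} with the translated torus C = {(t, −t⁻¹, −t⁻¹, t, t², −1, t⁻², −1) : t ∈ ℂ*} is exactly the single point ρ₁ = (1, −1, −1, 1, 1, −1, 1, −1). -/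
/-- in `(ℂ*)⁸`, the intersection `Π₁ ∩ Π₂ ∩ Π₃ ∩ C` of the three
braid components with the translated torus `C` is exactly the single point
`ρ₁ = (1, −1, −1, 1, 1, −1, 1, −1)`. -/
theorem Pi1_Pi2_Pi3_meet_C_in_rho1 :
    {x : Fin 8 → ℂ | ∃ s t : ℂ, s ≠ 0 ∧ t ≠ 0 ∧
        x = ![s, t, (s * t)⁻¹, 1, s, t, 1, (s * t)⁻¹]} ∩
    {x | ∃ s t : ℂ, s ≠ 0 ∧ t ≠ 0 ∧
        x = ![1, s, t, (s * t)⁻¹, (s * t)⁻¹, t, 1, s]} ∩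
    {x | ∃ s t : ℂ, s ≠ 0 ∧ t ≠ 0 ∧
        x = ![s, t, t, s, 1, (s * t)⁻¹, 1, (s * t)⁻¹]} ∩
    {x | ∃ t : ℂ, t ≠ 0 ∧
        x = ![t, -t⁻¹, -t⁻¹, t, t ^ 2, -1, (t ^ 2)⁻¹, -1]} =
    {![1, -1, -1, 1, 1, -1, 1, -1]} := by
  ext x
  constructor
  · rintro ⟨⟨⟨⟨s, t', _, _, h1⟩, -⟩, -⟩, t, ht, hC⟩
    have h3 : x 3 = 1 := by rw [h1]; simp
    have ht1 : t = 1 := by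
      have : x 3 = t := by rw [hC]; simp
      rw [h3] at this; exact this.symm
    subst ht1
    rw [hC]
    norm_num
  · rintro rfl
    refine ⟨⟨⟨⟨1, -1, one_ne_zero, by norm_num, by norm_num⟩,
      ⟨-1, -1, by norm_num, by norm_num, by norm_num⟩⟩,
      ⟨1, -1, one_ne_zero, by norm_num, by norm_num⟩⟩,
      ⟨1, one_ne_zero, by norm_num⟩⟩
end

section
/- In (ℂ*)⁸, the intersection Π₃ ∩ Π₄ ∩ Π₅ ∩ C of the three braid components Π₃ = {(s, t, t, s, 1, (st)⁻¹, 1, (st)⁻¹) : s,t ∈ ℂ*}, Π₄ = {(s, t, 1, (st)⁻¹, 1, s, t, (st)⁻¹) : s,t ∈ ℂ*}, Π₅ = {(s, 1, t, (st)⁻¹, 1, (st)⁻¹, t, s) : s,t ∈ ℂ*} with the translated torus C = {(t, −t⁻¹, −t⁻¹, t, t², −1, t⁻², −1) : t ∈ ℂ*} is exactly the single point ρ₂ = (−1, 1, 1, −1, 1, −1, 1, −1). -/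
/-- in `(ℂ*)⁸`, the intersection `Π₃ ∩ Π₄ ∩ Π₅ ∩ C` of the three
braid components with the translated torus `C` is exactly the single point
`ρ₂ = (−1, 1, 1, −1, 1, −1, 1, −1)`. -/
theorem Pi3_Pi4_Pi5_meet_C_in_rho2 :
    {x : Fin 8 → ℂ | ∃ s t : ℂ, s ≠ 0 ∧ t ≠ 0 ∧
        x = ![s, t, t, s, 1, (s * t)⁻¹, 1, (s * t)⁻¹]} ∩
    {x | ∃ s t : ℂ, s ≠ 0 ∧ t ≠ 0 ∧
        x = ![s, t, 1, (s * t)⁻¹, 1, s, t, (s * t)⁻¹]} ∩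
    {x | ∃ s t : ℂ, s ≠ 0 ∧ t ≠ 0 ∧
        x = ![s, 1, t, (s * t)⁻¹, 1, (s * t)⁻¹, t, s]} ∩
    {x | ∃ t : ℂ, t ≠ 0 ∧
        x = ![t, -t⁻¹, -t⁻¹, t, t ^ 2, -1, (t ^ 2)⁻¹, -1]} =
    {![-1, 1, 1, -1, 1, -1, 1, -1]} := by
  ext x
  constructor
  · rintro ⟨⟨⟨-, ⟨s, u, hs, hu, h4⟩⟩, -⟩, ⟨t, ht, hC⟩⟩
    have h2 : x 2 = 1 := by rw [h4]; simp
    have h2' : x 2 = -t⁻¹ := by rw [hC]; simp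
    have htm : t = -1 := by
      have : -t⁻¹ = 1 := h2' ▸ h2
      field_simp at this
      linear_combination -this
    subst htm
    rw [hC]
    norm_num
  · rintro rfl
    refine ⟨⟨⟨⟨-1, 1, by norm_num, one_ne_zero, ?_⟩,
      ⟨-1, 1, by norm_num, one_ne_zero, ?_⟩⟩,
      ⟨-1, 1, by norm_num, one_ne_zero, ?_⟩⟩,
      ⟨-1, by norm_num, ?_⟩⟩ <;> norm_num
end

section
/- The intersection of Γ with the subtorus {x ∈ (ℂ*)⁹ : x₃ = 1} is exactly the disjoint union of the two curves {(t, t⁻¹, 1, t⁻¹, t, t², 1, t⁻², 1) : t ∈ ℂ*} and {(t, −t⁻¹, 1, −t⁻¹, t, t², −1, t⁻², −1) : t ∈ ℂ*}; in particular, the second of these curves, after deleting the third coordinate, is the translated torus C = {(t, −t⁻¹, −t⁻¹, t, t², −1, t⁻², −1) : t ∈ ℂ*} of the deleted B₃ arrangement, and the two curves have no point in common. -/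
/-- The essential component `Γ` of the first characteristic variety of the
B₃ reflection arrangement, corresponding to the neighborly partition
`(156|248|379)`. -/
noncomputable def GammaB3 : Set (Fin 9 → ℂ) :=
  {x | ∃ s t : ℂ, s ≠ 0 ∧ t ≠ 0 ∧
    x = ![t, s, ((s * t) ^ 2)⁻¹, s, t, t ^ 2, (s * t)⁻¹, s ^ 2, (s * t)⁻¹]}

/-- The first curve `{(t, t⁻¹, 1, t⁻¹, t, t², 1, t⁻², 1)}`. -/
noncomputable def curveOne : Set (Fin 9 → ℂ) :=
  {x | ∃ t : ℂ, t ≠ 0 ∧ x = ![t, t⁻¹, 1, t⁻¹, t, t ^ 2, 1, (t ^ 2)⁻¹, 1]}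

/-- The second curve `{(t, −t⁻¹, 1, −t⁻¹, t, t², −1, t⁻², −1)}`. -/
noncomputable def curveTwo : Set (Fin 9 → ℂ) :=
  {x | ∃ t : ℂ, t ≠ 0 ∧ x = ![t, -t⁻¹, 1, -t⁻¹, t, t ^ 2, -1, (t ^ 2)⁻¹, -1]}

/-- `Γ ∩ {x₃ = 1}` is exactly the disjoint union of the two
curves above; deleting the third coordinate from the second curve yields the
translated torus `C` of the deleted B₃ arrangement. -/
theorem Gamma_meets_x3_eq_one :
    GammaB3 ∩ {x | x 2 = 1} = curveOne ∪ curveTwo ∧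
    curveOne ∩ curveTwo = ∅ ∧
    (fun x : Fin 9 → ℂ => (![x 0, x 1, x 3, x 4, x 5, x 6, x 7, x 8] : Fin 8 → ℂ)) ''
        curveTwo =
      {y : Fin 8 → ℂ | ∃ t : ℂ, t ≠ 0 ∧
        y = ![t, -t⁻¹, -t⁻¹, t, t ^ 2, -1, (t ^ 2)⁻¹, -1]} := by
  refine ⟨?_, ?_, ?_⟩
  · ext x
    simp only [GammaB3, curveOne, curveTwo, Set.mem_inter_iff, Set.mem_setOf_eq,
      Set.mem_union]
    constructor
    · rintro ⟨⟨s, t, hs, ht, rfl⟩, h2⟩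
      simp only [Matrix.cons_val_two, Matrix.tail_cons, Matrix.head_cons] at h2
      have hst : (s * t) ^ 2 = 1 := by
        field_simp at h2; linear_combination -h2
      have hcase : s * t = 1 ∨ s * t = -1 := by
        have : (s * t - 1) * (s * t + 1) = 0 := by ring_nf; linear_combination hst
        rcases mul_eq_zero.1 this with h | h
        · left; linear_combination h
        · right; linear_combination h
      rcases hcase with h | h
      · left
        refine ⟨t, ht, ?_⟩
        have hs' : s = t⁻¹ := by field_simp; linear_combination h
        subst hs'
        funext i
        fin_cases i <;> field_simp <;> ring
      · right
        refine ⟨t, ht, ?_⟩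
        have hs' : s = -t⁻¹ := by field_simp; linear_combination h
        subst hs'
        funext i
        fin_cases i <;> field_simp <;> ring
    · rintro (⟨t, ht, rfl⟩ | ⟨t, ht, rfl⟩)
      · refine ⟨⟨t⁻¹, t, inv_ne_zero ht, ht, ?_⟩, by simp⟩
        funext i; fin_cases i <;> field_simp
      · refine ⟨⟨-t⁻¹, t, neg_ne_zero.2 (inv_ne_zero ht), ht, ?_⟩, by simp⟩
        funext i; fin_cases i <;> field_simp <;> ring_nf <;> simp [mul_pow]
  · ext x
    simp only [curveOne, curveTwo, Set.mem_inter_iff, Set.mem_setOf_eq,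
      Set.mem_empty_iff_false, iff_false, not_and]
    rintro ⟨t, ht, rfl⟩ ⟨u, hu, h⟩
    have h6 : (1 : ℂ) = -1 := congrFun h 6
    norm_num at h6
  · ext y
    simp only [curveTwo, Set.mem_image, Set.mem_setOf_eq]
    constructor
    · rintro ⟨x, ⟨t, ht, rfl⟩, rfl⟩
      exact ⟨t, ht, by funext i; fin_cases i <;> rfl⟩
    · rintro ⟨t, ht, rfl⟩
      refine ⟨![t, -t⁻¹, 1, -t⁻¹, t, t ^ 2, -1, (t ^ 2)⁻¹, -1], ⟨t, ht, rfl⟩, ?_⟩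
      funext i; fin_cases i <;> rfl
end

section
/- The set of points of Γ all of whose coordinates square to 1 is exactly the four-element set {𝟙, ρ₁, ρ₂, ρ₁ρ₂}, where 𝟙 = (1,1,1,1,1,1,1,1,1), ρ₁ = (1, −1, 1, −1, 1, 1, −1, 1, −1), ρ₂ = (−1, 1, 1, 1, −1, 1, −1, 1, −1), and ρ₁ρ₂ = (−1, −1, 1, −1, −1, 1, 1, 1, 1); moreover this set is a subgroup of (ℂ*)⁹ isomorphic to ℤ/2 × ℤ/2. -/
/-- The four-element set `{𝟙, ρ₁, ρ₂, ρ₁ρ₂}`. -/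
def fourTorsionSet : Set (Fin 9 → ℂ) :=
  {![1, 1, 1, 1, 1, 1, 1, 1, 1],
   ![1, -1, 1, -1, 1, 1, -1, 1, -1],
   ![-1, 1, 1, 1, -1, 1, -1, 1, -1],
   ![-1, -1, 1, -1, -1, 1, 1, 1, 1]}

/-!
`Γ` is the image of the homomorphism `(ℂ*)² → (ℂ*)⁹` whose coordinates are the characters
`s ^ a * t ^ b` read off from its parametrization. Coordinates `0` and `1` are `t` and `s`, so this
homomorphism is injective; hence a point of `Γ` has order dividing `2` exactly when its parameter
`(s, t)` does, i.e. when `s, t = ±1`. The four sign choices give `𝟙, ρ₁, ρ₂, ρ₁ρ₂`, and the subgroup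
they form is the injective image of `μ₂ × μ₂ ≅ ℤ/2 × ℤ/2`.
-/

open Function

/-- Coordinate `i` of `Γ` is `s ^ a * t ^ b` with `(a, b) = gammaExponents i`. -/
def gammaExponents : Fin 9 → ℤ × ℤ :=
  ![(0, 1), (1, 0), (-2, -2), (1, 0), (0, 1), (0, 2), (-1, -1), (2, 0), (-1, -1)]

section CommGroup

variable (G : Type*) [CommGroup G]

def gammaHom : G × G →* (Fin 9 → G) :=
  MonoidHom.pi fun i =>
    (zpowGroupHom (gammaExponents i).1).comp (MonoidHom.fst G G) *
      (zpowGroupHom (gammaExponents i).2).comp (MonoidHom.snd G G)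

variable {G}

theorem gammaHom_apply (p : G × G) (i : Fin 9) :
    gammaHom G p i = p.1 ^ (gammaExponents i).1 * p.2 ^ (gammaExponents i).2 :=
  rfl

theorem gammaHom_injective : Injective (gammaHom G) := by
  intro p q h
  have h0 : p.2 = q.2 := by simpa [gammaHom_apply, gammaExponents] using congrFun h 0
  have h1 : p.1 = q.1 := by simpa [gammaHom_apply, gammaExponents] using congrFun h 1
  exact Prod.ext h1 h0

theorem gammaHom_sq_eq_one_iff {p : G × G} : gammaHom G p ^ 2 = 1 ↔ p ^ 2 = 1 := by
  rw [← map_pow (gammaHom G) p 2, (injective_iff_map_eq_one' (gammaHom G)).1 gammaHom_injective]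

end CommGroup

def gammaPoint (p : ℂˣ × ℂˣ) : Fin 9 → ℂ := fun i => (gammaHom ℂˣ p i : ℂ)

theorem gammaPoint_eq (s t : ℂˣ) :
    gammaPoint (s, t) =
      ![(t : ℂ), s, ((s * t : ℂ) ^ 2)⁻¹, s, t, t ^ 2, (s * t : ℂ)⁻¹, s ^ 2, (s * t : ℂ)⁻¹] := by
  funext i
  fin_cases i <;> simp [gammaPoint, gammaHom_apply, gammaExponents, mul_pow, mul_comm]

theorem GammaB3_eq_range : GammaB3 = Set.range gammaPoint := by
  ext x
  constructor
  · rintro ⟨s, t, hs, ht, rfl⟩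
    exact ⟨(Units.mk0 s hs, Units.mk0 t ht), gammaPoint_eq _ _⟩
  · rintro ⟨⟨s, t⟩, rfl⟩
    exact ⟨s, t, s.ne_zero, t.ne_zero, gammaPoint_eq s t⟩

theorem gammaPoint_sq_eq_one_iff {p : ℂˣ × ℂˣ} :
    (∀ i, gammaPoint p i ^ 2 = 1) ↔ p ^ 2 = 1 := by
  simp only [gammaPoint, ← gammaHom_sq_eq_one_iff, funext_iff, Pi.pow_apply, Pi.one_apply,
    Units.ext_iff, Units.val_pow_eq_pow_val, Units.val_one]

theorem GammaB3_sq_eq_one_eq_image :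
    {x ∈ GammaB3 | ∀ i, x i ^ 2 = 1} = gammaPoint '' {p | p ^ 2 = 1} := by
  rw [GammaB3_eq_range]
  ext x
  constructor
  · rintro ⟨⟨p, rfl⟩, hp⟩
    exact ⟨p, gammaPoint_sq_eq_one_iff.1 hp, rfl⟩
  · rintro ⟨p, hp, rfl⟩
    exact ⟨⟨p, rfl⟩, gammaPoint_sq_eq_one_iff.2 hp⟩

theorem fourTorsionSet_eq_image : fourTorsionSet = gammaPoint '' {p | p ^ 2 = 1} := by
  ext x
  constructor
  · rintro (rfl | rfl | rfl | rfl)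
    exacts [⟨(1, 1), by simp, by rw [gammaPoint_eq]; norm_num⟩,
      ⟨(-1, 1), by simp, by rw [gammaPoint_eq]; norm_num⟩,
      ⟨(1, -1), by simp, by rw [gammaPoint_eq]; norm_num⟩,
      ⟨(-1, -1), by simp, by rw [gammaPoint_eq]; norm_num⟩]
  · rintro ⟨⟨s, t⟩, hp, rfl⟩
    obtain ⟨hs, ht⟩ : (s : ℂ) ^ 2 = 1 ∧ (t : ℂ) ^ 2 = 1 := by
      simpa [Prod.ext_iff, ← Units.val_pow_eq_pow_val] using hp
    rw [sq_eq_one_iff] at hs ht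
    rw [gammaPoint_eq]
    rcases hs with hs | hs <;> rcases ht with ht | ht <;> rw [hs, ht] <;> norm_num [fourTorsionSet]

def gammaTwoTorsion : Subgroup (Fin 9 → ℂˣ) :=
  ((rootsOfUnity 2 ℂ).prod (rootsOfUnity 2 ℂ)).map (gammaHom ℂˣ)

theorem mem_gammaTwoTorsion_iff {u : Fin 9 → ℂˣ} :
    u ∈ gammaTwoTorsion ↔ (fun i => (u i : ℂ)) ∈ gammaPoint '' {p | p ^ 2 = 1} := by
  have hμ : ∀ p : ℂˣ × ℂˣ, p ∈ (rootsOfUnity 2 ℂ).prod (rootsOfUnity 2 ℂ) ↔ p ^ 2 = 1 := by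
    simp [Subgroup.mem_prod, mem_rootsOfUnity, Prod.ext_iff]
  have hcoe : ∀ p, gammaPoint p = (fun i => (u i : ℂ)) ↔ gammaHom ℂˣ p = u := fun p => by
    simp only [gammaPoint, funext_iff, Units.ext_iff]
  simp only [gammaTwoTorsion, Subgroup.mem_map, hμ, Set.mem_image, Set.mem_ofPred_eq, hcoe]

noncomputable def gammaTwoTorsionEquiv :
    gammaTwoTorsion ≃* Multiplicative (ZMod 2 × ZMod 2) :=
  let e : rootsOfUnity 2 ℂ ≃* Multiplicative (ZMod 2) :=
    mulEquivOfPrimeCardEq (Complex.card_rootsOfUnity 2) (by simp)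
  (Subgroup.equivMapOfInjective _ _ gammaHom_injective).symm
    |>.trans (Subgroup.prodEquiv _ _)
    |>.trans (MulEquiv.prodCongr e e)
    |>.trans (MulEquiv.prodMultiplicative (ZMod 2) (ZMod 2)).symm

/-- the points of `Γ` all of whose coordinates square to `1` are
exactly `{𝟙, ρ₁, ρ₂, ρ₁ρ₂}`, and this set is a subgroup of `(ℂ*)⁹`
isomorphic to `ℤ/2 × ℤ/2`. -/
theorem Gamma_two_torsion :
    {x ∈ GammaB3 | ∀ i, x i ^ 2 = 1} = fourTorsionSet ∧
    ∃ H : Subgroup (Fin 9 → ℂˣ),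
      (∀ u : Fin 9 → ℂˣ, u ∈ H ↔ (fun i => (u i : ℂ)) ∈ fourTorsionSet) ∧
      Nonempty (H ≃* Multiplicative (ZMod 2 × ZMod 2)) := by
  rw [GammaB3_sq_eq_one_eq_image, fourTorsionSet_eq_image]
  exact ⟨rfl, gammaTwoTorsion, fun u => mem_gammaTwoTorsion_iff, ⟨gammaTwoTorsionEquiv⟩⟩
end

section
/- In (ℂ*)⁷, the intersection Π₁ ∩ Π₂ ∩ Π₃ of the three non-local components of the first characteristic variety of the non-Fano arrangement is exactly the two-element set {𝟙, ρ}, where 𝟙 = (1,1,1,1,1,1,1) and ρ = (1, −1, −1, 1, −1, −1, 1). -/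
/-- in `(ℂ*)⁷`, the intersection `Π₁ ∩ Π₂ ∩ Π₃` of the three
non-local components of the first characteristic variety of the non-Fano
arrangement is exactly `{𝟙, ρ}` with `ρ = (1, −1, −1, 1, −1, −1, 1)`. -/
theorem nonFano_nonlocal_components_intersection :
    {x : Fin 7 → ℂ | ∃ s t : ℂ, s ≠ 0 ∧ t ≠ 0 ∧
        x = ![1, s, t, (s * t)⁻¹, s, t, (s * t)⁻¹]} ∩
    {x | ∃ s t : ℂ, s ≠ 0 ∧ t ≠ 0 ∧
        x = ![s, t, (s * t)⁻¹, 1, (s * t)⁻¹, t, s]} ∩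
    {x | ∃ s t : ℂ, s ≠ 0 ∧ t ≠ 0 ∧
        x = ![s, t, t, s, (s * t)⁻¹, (s * t)⁻¹, 1]} =
    {![1, 1, 1, 1, 1, 1, 1], ![1, -1, -1, 1, -1, -1, 1]} := by
  ext x
  simp only [Set.mem_inter_iff, Set.mem_setOf_eq, Set.mem_insert_iff,
    Set.mem_singleton_iff]
  constructor
  · rintro ⟨⟨⟨s1, t1, hs1, ht1, h1⟩, -⟩, ⟨s3, t3, hs3, ht3, h3⟩⟩
    have h0 : s3 = 1 := by
      have ha := congrFun h1 0; have hb := congrFun h3 0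
      simp only [Matrix.cons_val_zero] at ha hb
      rw [ha] at hb; exact hb.symm
    subst h0
    have e1 : s1 = t3 := by
      have ha := congrFun h1 1; have hb := congrFun h3 1
      simp only [Matrix.cons_val_one, Matrix.head_cons] at ha hb
      rw [ha] at hb; exact hb
    have e2 : t1 = t3 := by
      have ha := congrFun h1 2; have hb := congrFun h3 2
      simp only [Matrix.cons_val_two, Matrix.tail_cons, Matrix.head_cons] at ha hb
      rw [ha] at hb; exact hb
    have e3 : t3 * t3 = 1 := by
      have ha := congrFun h1 3; have hb := congrFun h3 3
      simp only [Matrix.cons_val_three, Matrix.tail_cons, Matrix.head_cons] at ha hb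
      rw [ha, e1, e2, inv_eq_one] at hb
      exact hb
    rcases mul_self_eq_one_iff.mp e3 with h | h <;> subst h
    · left
      rw [h3]; funext i; fin_cases i <;> norm_num
    · right
      rw [h3]; funext i; fin_cases i <;> norm_num
  · rintro (h | h) <;> subst h
    · refine ⟨⟨⟨1, 1, one_ne_zero, one_ne_zero, ?_⟩,
        ⟨1, 1, one_ne_zero, one_ne_zero, ?_⟩⟩,
        ⟨1, 1, one_ne_zero, one_ne_zero, ?_⟩⟩ <;>
        · funext i; fin_cases i <;> norm_num
    · refine ⟨⟨⟨-1, -1, by norm_num, by norm_num, ?_⟩,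
        ⟨1, -1, one_ne_zero, by norm_num, ?_⟩⟩,
        ⟨1, -1, one_ne_zero, by norm_num, ?_⟩⟩ <;>
        · funext i; fin_cases i <;> norm_num
end
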